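/- For all integers a, c ≥ 0 and b ≥ 1, the digraphs θ(a,b,c) and ∞(a+c+2, b+c+2) have the same complementarity spectrum: Π(θ(a,b,c)) = Π(∞(a+c+2, b+c+2)). -/

import Mathlib

open Matrix Polynomial

/-- `lam` is a complementarity eigenvalue of the real square matrix `A`. -/
def isComplEig {V : Type*} [Fintype V] (A : Matrix V V ℝ) (lam : ℝ) : Prop :=
  ∃ x : V → ℝ, x ≠ 0 ∧ 0 ≤ x ∧ 0 ≤ A.mulVec x - lam • x ∧
    ∑ i, x i * (A.mulVec x - lam • x) i = 0

-- Adjacency matrix of a digraph given by its arc relation.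
open scoped Classical in
noncomputable def adjMat {V : Type*} (adj : V → V → Prop) : Matrix V V ℝ :=
  Matrix.of fun i j => if adj i j then 1 else 0

/-- Arc relation of the digraph `∞(r,s)`: the coalescence of the directed cycles
`C_r` and `C_s` at the vertex `0`, on the vertex set `{0, …, r+s-2}`. -/
def inftyAdj (r s : ℕ) : Fin (r + s - 1) → Fin (r + s - 1) → Prop := fun i j =>
  (j.val = i.val + 1 ∧ i.val ≤ r - 2) ∨
  (i.val = r - 1 ∧ j.val = 0) ∨
  (i.val = 0 ∧ j.val = r) ∨
  (j.val = i.val + 1 ∧ r ≤ i.val ∧ i.val ≤ r + s - 3) ∨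
  (i.val = r + s - 2 ∧ j.val = 0)

/-- Arc relation of the digraph `θ(a,b,c)` on `a+b+c+2` vertices: `u = 0`, `v = a+1`,
a directed path from `u` to `v` through the `a` internal vertices `1, …, a`,
a directed path from `u` to `v` through the `b` internal vertices `a+2, …, a+b+1`,
and a directed path from `v` to `u` through the `c` internal vertices `a+b+2, …, a+b+c+1`. -/
def thetaAdj (a b c : ℕ) : Fin (a + b + c + 2) → Fin (a + b + c + 2) → Prop := fun i j =>
  (j.val = i.val + 1 ∧ i.val ≤ a) ∨
  (i.val = 0 ∧ j.val = a + 2) ∨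
  (j.val = i.val + 1 ∧ a + 2 ≤ i.val ∧ i.val ≤ a + b) ∨
  (i.val = a + b + 1 ∧ j.val = a + 1) ∨
  (c = 0 ∧ i.val = a + 1 ∧ j.val = 0) ∨
  (0 < c ∧ i.val = a + 1 ∧ j.val = a + b + 2) ∨
  (j.val = i.val + 1 ∧ a + b + 2 ≤ i.val ∧ i.val ≤ a + b + c) ∨
  (0 < c ∧ i.val = a + b + c + 1 ∧ j.val = 0)

set_option maxHeartbeats 1000000

/-! ### Generic helpers -/

open scoped Classical

lemma adjMat_mulVec {V : Type*} [Fintype V] (P : V → V → Prop) (x : V → ℝ) (i : V) :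
    (adjMat P).mulVec x i = ∑ j, if P i j then x j else 0 := by
  simp [adjMat, Matrix.mulVec, dotProduct, ite_mul]

lemma adjMat_mulVec_nonneg {V : Type*} [Fintype V] (P : V → V → Prop) (x : V → ℝ)
    (hx : ∀ j, 0 ≤ x j) (i : V) : 0 ≤ (adjMat P).mulVec x i := by
  rw [adjMat_mulVec]
  refine Finset.sum_nonneg fun j _ => ?_
  split
  · exact hx j
  · exact le_refl 0

lemma mulVec_of_unique {V : Type*} [Fintype V] [DecidableEq V] (P : V → V → Prop)
    (x : V → ℝ) (i t : V) (h : ∀ j, P i j ↔ j = t) :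
    (adjMat P).mulVec x i = x t := by
  rw [adjMat_mulVec, Finset.sum_congr rfl (fun j _ => by rw [if_congr (h j) rfl rfl])]
  simp

lemma mulVec_of_pair {V : Type*} [Fintype V] [DecidableEq V] (P : V → V → Prop) (x : V → ℝ)
    (i t1 t2 : V) (hne : t1 ≠ t2) (h : ∀ j, P i j ↔ (j = t1 ∨ j = t2)) :
    (adjMat P).mulVec x i = x t1 + x t2 := by
  rw [adjMat_mulVec, Finset.sum_congr rfl (fun j _ => by rw [if_congr (h j) rfl rfl])]
  have e : ∀ j : V, (if j = t1 ∨ j = t2 then x j else 0)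
      = (if j = t1 then x j else 0) + (if j = t2 then x j else 0) := by
    intro j
    by_cases h1 : j = t1 <;> by_cases h2 : j = t2 <;> simp [h1, h2] <;> simp_all
  rw [Finset.sum_congr rfl (fun j _ => e j), Finset.sum_add_distrib]
  simp

lemma complEig_terms_zero {V : Type*} [Fintype V] (P : V → V → Prop) {lam : ℝ} {x : V → ℝ}
    (hx : ∀ i, 0 ≤ x i) (hd : 0 ≤ (adjMat P).mulVec x - lam • x)
    (hsum : ∑ i, x i * ((adjMat P).mulVec x - lam • x) i = 0) :
    ∀ i, x i * ((adjMat P).mulVec x - lam • x) i = 0 := by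
  have h0 : ∀ i ∈ Finset.univ, 0 ≤ x i * ((adjMat P).mulVec x - lam • x) i :=
    fun i _ => mul_nonneg (hx i) (by simpa using hd i)
  exact fun i => (Finset.sum_eq_zero_iff_of_nonneg h0).mp hsum i (Finset.mem_univ i)

lemma complEig_eq_on_support {V : Type*} [Fintype V] (P : V → V → Prop) {lam : ℝ} {x : V → ℝ}
    (hx : ∀ i, 0 ≤ x i) (hd : 0 ≤ (adjMat P).mulVec x - lam • x)
    (hsum : ∑ i, x i * ((adjMat P).mulVec x - lam • x) i = 0) :
    ∀ i, 0 < x i → (adjMat P).mulVec x i = lam * x i := by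
  intro i hi
  have hterm := complEig_terms_zero P hx hd hsum i
  have h2 : ((adjMat P).mulVec x - lam • x) i = 0 := by
    rcases mul_eq_zero.mp hterm with h | h
    · exact absurd h (ne_of_gt hi)
    · exact h
  have := sub_eq_zero.mp (by simpa [Pi.sub_apply, smul_eq_mul] using h2)
  simpa using this

/-! ### Value-level combinatorics -/

/-- successor map of θ at nonzero vertices (value level). -/
def sT (a b c z : ℕ) : ℕ :=
  if z = a+1 then (if c = 0 then 0 else a+b+2)
  else if z = a+b+1 then a+1
  else if z = a+b+c+1 then 0
  else z+1

/-- successor map of ∞(a+c+2, b+c+2) at nonzero vertices (value level). -/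
def sI (a b c z : ℕ) : ℕ :=
  if z = a+c+1 then 0 else if z = a+b+2*c+2 then 0 else z+1

/-- projection ∞ → θ (value level). -/
def phiV (a b c w : ℕ) : ℕ :=
  if w ≤ a+1 then w
  else if w ≤ a+c+1 then w + b
  else if w ≤ a+b+c+1 then w - c
  else if w = a+b+c+2 then a+1
  else w - (c+1)

/-- exponent function for the full-support eigenvector of θ (value level). -/
def eT (a b c z : ℕ) : ℕ :=
  if z = 0 then a+b+c+1
  else if z ≤ a+1 then b + z - 1
  else if z ≤ a+b+1 then z - 2
  else z - 1

lemma sT_spec (a b c z : ℕ) :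
    (z = a+1 ∧ c = 0 ∧ sT a b c z = 0) ∨
    (z = a+1 ∧ c ≠ 0 ∧ sT a b c z = a+b+2) ∨
    (z ≠ a+1 ∧ z = a+b+1 ∧ sT a b c z = a+1) ∨
    (z ≠ a+1 ∧ z ≠ a+b+1 ∧ z = a+b+c+1 ∧ sT a b c z = 0) ∨
    (z ≠ a+1 ∧ z ≠ a+b+1 ∧ z ≠ a+b+c+1 ∧ sT a b c z = z+1) := by
  unfold sT; split_ifs <;> omega

lemma sI_spec (a b c z : ℕ) :
    (z = a+c+1 ∧ sI a b c z = 0) ∨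
    (z ≠ a+c+1 ∧ z = a+b+2*c+2 ∧ sI a b c z = 0) ∨
    (z ≠ a+c+1 ∧ z ≠ a+b+2*c+2 ∧ sI a b c z = z+1) := by
  unfold sI; split_ifs <;> omega

lemma phiV_spec (a b c w : ℕ) :
    (w ≤ a+1 ∧ phiV a b c w = w) ∨
    (¬ w ≤ a+1 ∧ w ≤ a+c+1 ∧ phiV a b c w = w + b) ∨
    (¬ w ≤ a+1 ∧ ¬ w ≤ a+c+1 ∧ w ≤ a+b+c+1 ∧ phiV a b c w + c = w) ∨
    (¬ w ≤ a+1 ∧ ¬ w ≤ a+c+1 ∧ ¬ w ≤ a+b+c+1 ∧ w = a+b+c+2 ∧ phiV a b c w = a+1) ∨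
    (¬ w ≤ a+1 ∧ ¬ w ≤ a+c+1 ∧ ¬ w ≤ a+b+c+1 ∧ w ≠ a+b+c+2 ∧ phiV a b c w + (c+1) = w) := by
  unfold phiV; split_ifs <;> omega

lemma eT_spec (a b c z : ℕ) :
    (z = 0 ∧ eT a b c z = a+b+c+1) ∨
    (z ≠ 0 ∧ z ≤ a+1 ∧ eT a b c z + 1 = b + z) ∨
    (z ≠ 0 ∧ ¬ z ≤ a+1 ∧ z ≤ a+b+1 ∧ eT a b c z + 2 = z) ∨
    (z ≠ 0 ∧ ¬ z ≤ a+1 ∧ ¬ z ≤ a+b+1 ∧ eT a b c z + 1 = z) := by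
  unfold eT; split_ifs <;> omega

lemma sT_lt (a b c : ℕ) (hb : 1 ≤ b) {z : ℕ} (hz : z < a+b+c+2) : sT a b c z < a+b+c+2 := by
  have := sT_spec a b c z; omega

lemma sI_lt (a b c : ℕ) {z : ℕ} (hz : z < a + c + 2 + (b + c + 2) - 1) :
    sI a b c z < a + c + 2 + (b + c + 2) - 1 := by
  have := sI_spec a b c z; omega

lemma phiV_lt (a b c : ℕ) (hb : 1 ≤ b) {w : ℕ} (hw : w < a + c + 2 + (b + c + 2) - 1) :
    phiV a b c w < a + b + c + 2 := by
  have := phiV_spec a b c w; omega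

lemma phiV_ne_zero (a b c : ℕ) {w : ℕ} (hw : w ≠ 0) : phiV a b c w ≠ 0 := by
  have := phiV_spec a b c w; omega

lemma phiV_comm (a b c : ℕ) (hb : 1 ≤ b) {w : ℕ} (hw : w < a + c + 2 + (b + c + 2) - 1)
    (hw0 : w ≠ 0) : phiV a b c (sI a b c w) = sT a b c (phiV a b c w) := by
  have h1 := sI_spec a b c w
  have h2 := phiV_spec a b c w
  have h3 := phiV_spec a b c (sI a b c w)
  have h4 := sT_spec a b c (phiV a b c w)
  omega

lemma phiV_surj (a b c : ℕ) (hb : 1 ≤ b) {z : ℕ} (hz : z < a+b+c+2) :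
    ∃ w, w < a + c + 2 + (b + c + 2) - 1 ∧ phiV a b c w = z := by
  refine ⟨if z ≤ a+1 then z else if z ≤ a+b+1 then z + c else z - b, ?_, ?_⟩
  · split_ifs <;> omega
  · have := phiV_spec a b c (if z ≤ a+1 then z else if z ≤ a+b+1 then z + c else z - b)
    split_ifs at this ⊢ <;> omega

lemma eT_step (a b c : ℕ) (hb : 1 ≤ b) {z : ℕ} (hz : z < a+b+c+2) (h0 : z ≠ 0) :
    eT a b c (sT a b c z) = eT a b c z + 1 := by
  have h1 := sT_spec a b c z
  have h2 := eT_spec a b c z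
  have h3 := eT_spec a b c (sT a b c z)
  omega

/-! ### Adjacency characterizations -/

lemma thetaAdj_iff (a b c : ℕ) (hb : 1 ≤ b) (i j : Fin (a+b+c+2)) (hi : i.val ≠ 0) :
    thetaAdj a b c i j ↔ j.val = sT a b c i.val := by
  have hi2 := i.isLt; have hj2 := j.isLt
  rcases sT_spec a b c i.val with ⟨h1, h2, h3⟩ | ⟨h1, h2, h3⟩ | ⟨h1, h2, h3⟩ |
    ⟨h1, h2, h3, h4⟩ | ⟨h1, h2, h3, h4⟩ <;>
    rw [show sT a b c i.val = _ from by assumption] <;> simp only [thetaAdj] <;> omega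

lemma thetaAdj_zero_iff (a b c : ℕ) (hb : 1 ≤ b) (i j : Fin (a+b+c+2)) (hi : i.val = 0) :
    thetaAdj a b c i j ↔ (j.val = 1 ∨ j.val = a + 2) := by
  have hi2 := i.isLt; have hj2 := j.isLt
  simp only [thetaAdj]
  omega

lemma inftyAdj_iff (a b c : ℕ) (i j : Fin (a + c + 2 + (b + c + 2) - 1)) (hi : i.val ≠ 0) :
    inftyAdj (a+c+2) (b+c+2) i j ↔ j.val = sI a b c i.val := by
  have hi2 := i.isLt; have hj2 := j.isLt
  rcases sI_spec a b c i.val with ⟨h1, h2⟩ | ⟨h1, h2, h3⟩ | ⟨h1, h2, h3⟩ <;>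
    rw [show sI a b c i.val = _ from by assumption] <;> simp only [inftyAdj] <;> omega

lemma inftyAdj_zero_iff (a b c : ℕ) (i j : Fin (a + c + 2 + (b + c + 2) - 1)) (hi : i.val = 0) :
    inftyAdj (a+c+2) (b+c+2) i j ↔ (j.val = 1 ∨ j.val = a + c + 2) := by
  have hi2 := i.isLt; have hj2 := j.isLt
  simp only [inftyAdj]
  omega

/-! ### mulVec formulas -/

lemma theta_mulVec_ne (a b c : ℕ) (hb : 1 ≤ b) (x : Fin (a+b+c+2) → ℝ)
    (i : Fin (a+b+c+2)) (hi : i.val ≠ 0) :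
    (adjMat (thetaAdj a b c)).mulVec x i = x ⟨sT a b c i.val, sT_lt a b c hb i.isLt⟩ := by
  apply mulVec_of_unique
  intro j
  rw [thetaAdj_iff a b c hb i j hi, Fin.ext_iff]

lemma theta_mulVec_zero (a b c : ℕ) (hb : 1 ≤ b) (x : Fin (a+b+c+2) → ℝ)
    (i : Fin (a+b+c+2)) (hi : i.val = 0) :
    (adjMat (thetaAdj a b c)).mulVec x i
      = x ⟨1, by omega⟩ + x ⟨a+2, by omega⟩ := by
  apply mulVec_of_pair
  · simp [Fin.ext_iff]
  · intro j
    rw [thetaAdj_zero_iff a b c hb i j hi]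
    simp [Fin.ext_iff]

lemma infty_mulVec_ne (a b c : ℕ) (y : Fin (a + c + 2 + (b + c + 2) - 1) → ℝ)
    (w : Fin (a + c + 2 + (b + c + 2) - 1)) (hw : w.val ≠ 0) :
    (adjMat (inftyAdj (a+c+2) (b+c+2))).mulVec y w
      = y ⟨sI a b c w.val, sI_lt a b c w.isLt⟩ := by
  apply mulVec_of_unique
  intro j
  rw [inftyAdj_iff a b c w j hw, Fin.ext_iff]

lemma infty_mulVec_zero (a b c : ℕ) (y : Fin (a + c + 2 + (b + c + 2) - 1) → ℝ)
    (w : Fin (a + c + 2 + (b + c + 2) - 1)) (hw : w.val = 0) :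
    (adjMat (inftyAdj (a+c+2) (b+c+2))).mulVec y w
      = y ⟨1, by omega⟩ + y ⟨a+c+2, by omega⟩ := by
  apply mulVec_of_pair
  · simp [Fin.ext_iff]
  · intro j
    rw [inftyAdj_zero_iff a b c w j hw]
    simp [Fin.ext_iff]

/-! ### Membership constructions in θ -/

/-- indicator vector of the first cycle of θ. -/
noncomputable def cycInd (a b c : ℕ) : Fin (a+b+c+2) → ℝ :=
  fun z => if (z.val ≤ a+1 ∨ a+b+2 ≤ z.val) then 1 else 0

lemma cycInd_mk (a b c k : ℕ) (hk : k < a+b+c+2) :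
    cycInd a b c ⟨k, hk⟩ = if (k ≤ a+1 ∨ a+b+2 ≤ k) then 1 else 0 := rfl

lemma cycInd_apply (a b c : ℕ) (z : Fin (a+b+c+2)) :
    cycInd a b c z = if (z.val ≤ a+1 ∨ a+b+2 ≤ z.val) then 1 else 0 := rfl

lemma cycInd_nonneg (a b c : ℕ) (z : Fin (a+b+c+2)) : 0 ≤ cycInd a b c z := by
  rw [cycInd_apply]; split_ifs <;> norm_num

/-- indicator vector of the vertex 0 of θ. -/
noncomputable def zInd (a b c : ℕ) : Fin (a+b+c+2) → ℝ :=
  fun z => if z.val = 0 then 1 else 0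

lemma zInd_mk (a b c k : ℕ) (hk : k < a+b+c+2) :
    zInd a b c ⟨k, hk⟩ = if k = 0 then 1 else 0 := rfl

lemma zInd_apply (a b c : ℕ) (z : Fin (a+b+c+2)) :
    zInd a b c z = if z.val = 0 then 1 else 0 := rfl

/-- geometric vector on θ. -/
noncomputable def geoVec (a b c : ℕ) (lam : ℝ) : Fin (a+b+c+2) → ℝ :=
  fun z => lam ^ eT a b c z.val

lemma geoVec_mk (a b c : ℕ) (lam : ℝ) (k : ℕ) (hk : k < a+b+c+2) :
    geoVec a b c lam ⟨k, hk⟩ = lam ^ eT a b c k := rfl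

lemma geoVec_apply (a b c : ℕ) (lam : ℝ) (z : Fin (a+b+c+2)) :
    geoVec a b c lam z = lam ^ eT a b c z.val := rfl

lemma zero_mem_theta (a b c : ℕ) (hb : 1 ≤ b) :
    isComplEig (adjMat (thetaAdj a b c)) 0 := by
  refine ⟨zInd a b c, ?_, ?_, ?_, ?_⟩
  · intro h
    have := congrFun h ⟨0, by omega⟩
    rw [zInd_mk, if_pos rfl] at this
    norm_num at this
  · intro z
    rw [Pi.zero_apply, zInd_apply]
    split_ifs <;> norm_num
  · intro z
    simp only [Pi.sub_apply, Pi.smul_apply, smul_eq_mul, zero_mul, sub_zero, Pi.zero_apply]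
    exact adjMat_mulVec_nonneg _ _ (fun j => by rw [zInd_apply]; split_ifs <;> norm_num) z
  · apply Finset.sum_eq_zero
    intro z _
    simp only [Pi.sub_apply, Pi.smul_apply, smul_eq_mul, zero_mul, sub_zero]
    by_cases hz : z.val = 0
    · rw [theta_mulVec_zero a b c hb _ z hz, zInd_apply, zInd_mk, zInd_mk,
        if_pos hz, if_neg (show ¬(1 = 0) by omega), if_neg (show ¬(a+2 = 0) by omega)]
      ring
    · rw [zInd_apply, if_neg hz, zero_mul]

lemma one_mem_theta (a b c : ℕ) (hb : 1 ≤ b) :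
    isComplEig (adjMat (thetaAdj a b c)) 1 := by
  have key : ∀ z : Fin (a+b+c+2), (z.val ≤ a+1 ∨ a+b+2 ≤ z.val) →
      (adjMat (thetaAdj a b c)).mulVec (cycInd a b c) z = 1 := by
    intro z hz
    by_cases h0 : z.val = 0
    · rw [theta_mulVec_zero a b c hb _ z h0, cycInd_mk, cycInd_mk,
        if_pos (show (1 ≤ a+1 ∨ a+b+2 ≤ 1) by omega),
        if_neg (show ¬(a+2 ≤ a+1 ∨ a+b+2 ≤ a+2) by omega)]
      ring
    · rw [theta_mulVec_ne a b c hb _ z h0, cycInd_mk]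
      have hs := sT_spec a b c z.val
      rw [if_pos (by omega)]
  refine ⟨cycInd a b c, ?_, ?_, ?_, ?_⟩
  · intro h
    have := congrFun h ⟨0, by omega⟩
    rw [cycInd_mk, if_pos (by omega)] at this
    norm_num at this
  · intro z
    rw [Pi.zero_apply]
    exact cycInd_nonneg a b c z
  · intro z
    simp only [Pi.sub_apply, Pi.smul_apply, smul_eq_mul, one_mul, Pi.zero_apply]
    by_cases hz : (z.val ≤ a+1 ∨ a+b+2 ≤ z.val)
    · rw [key z hz, cycInd_apply, if_pos hz]
      norm_num
    · rw [cycInd_apply, if_neg hz, sub_zero]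
      exact adjMat_mulVec_nonneg _ _ (cycInd_nonneg a b c) z
  · apply Finset.sum_eq_zero
    intro z _
    simp only [Pi.sub_apply, Pi.smul_apply, smul_eq_mul, one_mul]
    by_cases hz : (z.val ≤ a+1 ∨ a+b+2 ≤ z.val)
    · rw [key z hz, cycInd_apply, if_pos hz]
      ring
    · rw [cycInd_apply, if_neg hz, zero_mul]

lemma lam_mem_theta (a b c : ℕ) (hb : 1 ≤ b) (lam : ℝ) (hlam : 0 < lam)
    (heq : lam ^ (a+b+c+2) = lam ^ a + lam ^ b) :
    isComplEig (adjMat (thetaAdj a b c)) lam := by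
  have hmain : ∀ z : Fin (a+b+c+2),
      (adjMat (thetaAdj a b c)).mulVec (geoVec a b c lam) z
        = lam * geoVec a b c lam z := by
    intro z
    by_cases h0 : z.val = 0
    · rw [theta_mulVec_zero a b c hb _ z h0, geoVec_mk, geoVec_mk, geoVec_apply]
      have e1 : eT a b c 1 = b := by have := eT_spec a b c 1; omega
      have e2 : eT a b c (a+2) = a := by have := eT_spec a b c (a+2); omega
      have e0 : eT a b c z.val = a+b+c+1 := by have := eT_spec a b c z.val; omega
      rw [e1, e2, e0, ← pow_succ']
      rw [show (a+b+c+1)+1 = a+b+c+2 by omega, heq]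
      ring
    · rw [theta_mulVec_ne a b c hb _ z h0, geoVec_mk, geoVec_apply]
      rw [eT_step a b c hb z.isLt h0, pow_succ]
      ring
  refine ⟨geoVec a b c lam, ?_, ?_, ?_, ?_⟩
  · intro h
    have := congrFun h ⟨0, by omega⟩
    rw [geoVec_mk] at this
    exact absurd this (ne_of_gt (pow_pos hlam _))
  · intro z
    rw [Pi.zero_apply, geoVec_apply]
    exact le_of_lt (pow_pos hlam _)
  · intro z
    simp only [Pi.sub_apply, Pi.smul_apply, smul_eq_mul, Pi.zero_apply]
    rw [hmain z]
    simp
  · apply Finset.sum_eq_zero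
    intro z _
    simp only [Pi.sub_apply, Pi.smul_apply, smul_eq_mul]
    rw [hmain z]
    ring

/-! ### Direction 1: pull back along the fibration φ -/

noncomputable def pullVec (a b c : ℕ) (hb : 1 ≤ b) (x : Fin (a+b+c+2) → ℝ) :
    Fin (a + c + 2 + (b + c + 2) - 1) → ℝ :=
  fun w => x ⟨phiV a b c w.val, phiV_lt a b c hb w.isLt⟩

lemma pullVec_mk (a b c : ℕ) (hb : 1 ≤ b) (x : Fin (a+b+c+2) → ℝ) (k : ℕ)
    (hk : k < a + c + 2 + (b + c + 2) - 1) :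
    pullVec a b c hb x ⟨k, hk⟩ = x ⟨phiV a b c k, phiV_lt a b c hb hk⟩ := rfl

lemma pullVec_apply (a b c : ℕ) (hb : 1 ≤ b) (x : Fin (a+b+c+2) → ℝ)
    (w : Fin (a + c + 2 + (b + c + 2) - 1)) :
    pullVec a b c hb x w = x ⟨phiV a b c w.val, phiV_lt a b c hb w.isLt⟩ := rfl

lemma dir1 (a b c : ℕ) (hb : 1 ≤ b) (lam : ℝ) :
    isComplEig (adjMat (thetaAdj a b c)) lam →
    isComplEig (adjMat (inftyAdj (a+c+2) (b+c+2))) lam := by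
  rintro ⟨x, hx0, hxnn, hd, hsum⟩
  have hxn : ∀ i, 0 ≤ x i := fun i => hxnn i
  have hterm := complEig_terms_zero _ hxn hd hsum
  have hdn : ∀ i, 0 ≤ (adjMat (thetaAdj a b c)).mulVec x i - lam * x i := by
    intro i; have := hd i; simpa [Pi.sub_apply, smul_eq_mul] using this
  have htermn : ∀ i, x i * ((adjMat (thetaAdj a b c)).mulVec x i - lam * x i) = 0 := by
    intro i; have := hterm i; simpa [Pi.sub_apply, smul_eq_mul] using this
  have hcom : ∀ w : Fin (a + c + 2 + (b + c + 2) - 1),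
      (adjMat (inftyAdj (a+c+2) (b+c+2))).mulVec (pullVec a b c hb x) w
        = (adjMat (thetaAdj a b c)).mulVec x ⟨phiV a b c w.val, phiV_lt a b c hb w.isLt⟩ := by
    intro w
    by_cases hw : w.val = 0
    · have hp0 : phiV a b c w.val = 0 := by
        have := phiV_spec a b c w.val; omega
      rw [infty_mulVec_zero a b c _ w hw,
        theta_mulVec_zero a b c hb x ⟨phiV a b c w.val, phiV_lt a b c hb w.isLt⟩ hp0,
        pullVec_mk, pullVec_mk]
      congr 1
      · exact congrArg x (Fin.ext (by
          show phiV a b c (a+c+2) = a+2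
          have := phiV_spec a b c (a+c+2)
          omega))
    · rw [infty_mulVec_ne a b c _ w hw,
        theta_mulVec_ne a b c hb x ⟨phiV a b c w.val, phiV_lt a b c hb w.isLt⟩
          (phiV_ne_zero a b c hw),
        pullVec_mk]
      exact congrArg x (Fin.ext (by
        show phiV a b c (sI a b c w.val) = sT a b c (phiV a b c w.val)
        exact phiV_comm a b c hb w.isLt hw))
  refine ⟨pullVec a b c hb x, ?_, ?_, ?_, ?_⟩
  · obtain ⟨z, hz⟩ := Function.ne_iff.mp hx0
    obtain ⟨w, hwlt, hwz⟩ := phiV_surj a b c hb z.isLt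
    intro h
    apply hz
    have := congrFun h ⟨w, hwlt⟩
    rw [pullVec_mk, Pi.zero_apply] at this
    rwa [show (⟨phiV a b c w, phiV_lt a b c hb hwlt⟩ : Fin (a+b+c+2)) = z from
      Fin.ext hwz] at this
  · intro w
    exact hxn _
  · intro w
    simp only [Pi.sub_apply, Pi.smul_apply, smul_eq_mul, Pi.zero_apply]
    rw [hcom w, pullVec_apply]
    exact hdn _
  · apply Finset.sum_eq_zero
    intro w _
    simp only [Pi.sub_apply, Pi.smul_apply, smul_eq_mul]
    rw [hcom w, pullVec_apply]
    exact htermn _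

/-! ### Direction 2 -/

lemma pow_eq_one_forces (lam : ℝ) (hlam : 0 < lam) {n : ℕ} (hn : n ≠ 0)
    (h : lam ^ n = 1) : lam = 1 := by
  rcases lt_trichotomy lam 1 with h1 | h1 | h1
  · have := pow_lt_one₀ (le_of_lt hlam) h1 hn
    linarith
  · exact h1
  · have := one_lt_pow₀ h1 hn
    linarith

lemma dir2 (a b c : ℕ) (hb : 1 ≤ b) (lam : ℝ) :
    isComplEig (adjMat (inftyAdj (a+c+2) (b+c+2))) lam →
    isComplEig (adjMat (thetaAdj a b c)) lam := by
  rintro ⟨y, hy0, hynn, hd, hsum⟩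
  have hyn : ∀ i, 0 ≤ y i := fun i => hynn i
  have E := complEig_eq_on_support _ hyn hd hsum
  obtain ⟨i0, hi0⟩ := Function.ne_iff.mp hy0
  have hi0pos : 0 < y i0 := lt_of_le_of_ne (hyn i0) (Ne.symm hi0)
  have hlam0 : 0 ≤ lam := by
    have h1 := E i0 hi0pos
    have h2 := adjMat_mulVec_nonneg (inftyAdj (a+c+2) (b+c+2)) y hyn i0
    nlinarith
  rcases eq_or_lt_of_le hlam0 with hlam | hlam
  · rw [← hlam]
    exact zero_mem_theta a b c hb
  -- value-level vector
  set Y : ℕ → ℝ := fun k =>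
    if h : k < a + c + 2 + (b + c + 2) - 1 then y ⟨k, h⟩ else 0 with hYdef
  have Ydef : ∀ (k : ℕ) (h : k < a + c + 2 + (b + c + 2) - 1), Y k = y ⟨k, h⟩ :=
    fun k h => dif_pos h
  have Ynn : ∀ k, 0 ≤ Y k := by
    intro k
    rw [hYdef]
    dsimp only
    split
    · exact hyn _
    · exact le_refl 0
  have hstepY : ∀ k, k ≠ 0 → ∀ hk : k < a + c + 2 + (b + c + 2) - 1, 0 < Y k →
      Y (sI a b c k) = lam * Y k := by
    intro k h0 hk hY
    rw [Ydef k hk] at hY ⊢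
    rw [Ydef (sI a b c k) (sI_lt a b c hk)]
    rw [← infty_mulVec_ne a b c y ⟨k, hk⟩ h0]
    exact E _ hY
  -- positivity propagates to vertex 0
  have hz0 : 0 < Y 0 := by
    have reach : ∀ m (w : ℕ) (hw : w < a + c + 2 + (b + c + 2) - 1),
        a + c + 2 + (b + c + 2) - 1 - w ≤ m → 0 < Y w → 0 < Y 0 := by
      intro m
      induction m with
      | zero => intro w hw hm hYw; exact absurd hm (by omega)
      | succ m ih =>
        intro w hw hm hYw
        by_cases h0 : w = 0
        · rwa [h0] at hYw
        · have h1 := hstepY w h0 hw hYw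
          have h2 : 0 < Y (sI a b c w) := by rw [h1]; exact mul_pos hlam hYw
          by_cases hz : sI a b c w = 0
          · rwa [hz] at h2
          · exact ih (sI a b c w) (sI_lt a b c hw)
              (by have := sI_spec a b c w; omega) h2
    have h01 : 0 < Y i0.val := by
      rw [Ydef i0.val i0.isLt]
      exact hi0pos
    exact reach (a + c + 2 + (b + c + 2) - 1) i0.val i0.isLt (by omega) h01
  -- balance equation at vertex 0
  have hE0 : Y 1 + Y (a+c+2) = lam * Y 0 := by
    rw [Ydef 0 (by omega), Ydef 1 (by omega), Ydef (a+c+2) (by omega)]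
    rw [← infty_mulVec_zero a b c y ⟨0, by omega⟩ rfl]
    exact E _ (by rw [← Ydef 0 (by omega)]; exact hz0)
  -- chains along the two cycles
  have chain1 : 0 < Y 1 → ∀ k, k ≤ a+c → 0 < Y (k+1) ∧ Y (k+1) = lam ^ k * Y 1 := by
    intro h1 k
    induction k with
    | zero => intro _; exact ⟨h1, by norm_num⟩
    | succ k ih =>
      intro hk
      obtain ⟨hpos, heqk⟩ := ih (by omega)
      have hs := hstepY (k+1) (by omega) (by omega) hpos
      have hsik : sI a b c (k+1) = k+2 := by
        have := sI_spec a b c (k+1); omega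
      rw [hsik] at hs
      constructor
      · rw [hs]; exact mul_pos hlam hpos
      · rw [hs, heqk, pow_succ]; ring
  have chain2 : 0 < Y (a+c+2) → ∀ k, k ≤ b+c →
      0 < Y (a+c+2+k) ∧ Y (a+c+2+k) = lam ^ k * Y (a+c+2) := by
    intro h1 k
    induction k with
    | zero => intro _; exact ⟨h1, by norm_num⟩
    | succ k ih =>
      intro hk
      obtain ⟨hpos, heqk⟩ := ih (by omega)
      have hs := hstepY (a+c+2+k) (by omega) (by omega) hpos
      have hsik : sI a b c (a+c+2+k) = a+c+2+(k+1) := by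
        have := sI_spec a b c (a+c+2+k); omega
      rw [hsik] at hs
      constructor
      · rw [hs]; exact mul_pos hlam hpos
      · rw [hs, heqk, pow_succ]; ring
  have h01 : 0 < Y 1 → Y 0 = lam ^ (a+c+1) * Y 1 := by
    intro h1
    obtain ⟨hpos, heqk⟩ := chain1 h1 (a+c) (le_refl _)
    have hs := hstepY (a+c+1) (by omega) (by omega) hpos
    have hsik : sI a b c (a+c+1) = 0 := by
      have := sI_spec a b c (a+c+1); omega
    rw [hsik] at hs
    rw [hs, heqk, pow_succ]
    ring
  have h0r : 0 < Y (a+c+2) → Y 0 = lam ^ (b+c+1) * Y (a+c+2) := by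
    intro h1
    obtain ⟨hpos, heqk⟩ := chain2 h1 (b+c) (le_refl _)
    have hs := hstepY (a+c+2+(b+c)) (by omega) (by omega) hpos
    have hsik : sI a b c (a+c+2+(b+c)) = 0 := by
      have := sI_spec a b c (a+c+2+(b+c)); omega
    rw [hsik] at hs
    rw [hs, heqk, pow_succ]
    ring
  -- case analysis on the two branch values
  rcases (Ynn 1).lt_or_eq with hY1 | hY1
  · rcases (Ynn (a+c+2)).lt_or_eq with hYr | hYr
    · -- both branches positive: λ satisfies the θ equation
      have h1 := h01 hY1
      have h2 := h0r hYr
      have hkey2 : (lam^(a+c+1) + lam^(b+c+1)) * Y 0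
          = (lam * (lam^(a+c+1) * lam^(b+c+1))) * Y 0 := by
        linear_combination (lam^(a+c+1) * lam^(b+c+1)) * hE0
          + lam^(a+c+1) * h2 + lam^(b+c+1) * h1
      have key : lam^(a+c+1) + lam^(b+c+1) = lam * (lam^(a+c+1) * lam^(b+c+1)) :=
        mul_right_cancel₀ (ne_of_gt hz0) hkey2
      apply lam_mem_theta a b c hb lam hlam
      have hc1 : (0:ℝ) < lam^(c+1) := pow_pos hlam _
      have expand : lam^(c+1) * lam^(a+b+c+2) = lam^(c+1) * (lam^a + lam^b) := by
        have e1 : lam^(c+1) * lam^(a+b+c+2) = lam * (lam^(a+c+1) * lam^(b+c+1)) := by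
          rw [← pow_add, ← pow_add, ← pow_succ']
          congr 1
          omega
        have e2 : lam^(c+1) * (lam^a + lam^b) = lam^(a+c+1) + lam^(b+c+1) := by
          rw [mul_add, ← pow_add, ← pow_add,
            show c+1+a = a+c+1 from by omega, show c+1+b = b+c+1 from by omega]
        rw [e1, e2]
        exact key.symm
      exact mul_left_cancel₀ (ne_of_gt hc1) expand
    · -- only the first cycle: λ = 1
      have h1 := h01 hY1
      have hE0' : Y 1 = lam * Y 0 := by rw [← hYr] at hE0; linarith
      have hpow : lam ^ (a+c+2) * Y 1 = 1 * Y 1 := by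
        have : lam ^ (a+c+2) = lam * lam ^ (a+c+1) := by
          rw [← pow_succ']
        rw [this, one_mul]
        calc lam * lam ^ (a+c+1) * Y 1 = lam * (lam ^ (a+c+1) * Y 1) := by ring
          _ = lam * Y 0 := by rw [← h1]
          _ = Y 1 := hE0'.symm
      have hl1 : lam = 1 :=
        pow_eq_one_forces lam hlam (by omega)
          (mul_right_cancel₀ (ne_of_gt hY1) hpow)
      rw [hl1]
      exact one_mem_theta a b c hb
  · rcases (Ynn (a+c+2)).lt_or_eq with hYr | hYr
    · -- only the second cycle: λ = 1
      have h2 := h0r hYr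
      have hE0' : Y (a+c+2) = lam * Y 0 := by rw [← hY1] at hE0; linarith
      have hpow : lam ^ (b+c+2) * Y (a+c+2) = 1 * Y (a+c+2) := by
        have : lam ^ (b+c+2) = lam * lam ^ (b+c+1) := by
          rw [← pow_succ']
        rw [this, one_mul]
        calc lam * lam ^ (b+c+1) * Y (a+c+2) = lam * (lam ^ (b+c+1) * Y (a+c+2)) := by ring
          _ = lam * Y 0 := by rw [← h2]
          _ = Y (a+c+2) := hE0'.symm
      have hl1 : lam = 1 :=
        pow_eq_one_forces lam hlam (by omega)
          (mul_right_cancel₀ (ne_of_gt hYr) hpow)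
      rw [hl1]
      exact one_mem_theta a b c hb
    · -- both zero: contradiction
      exfalso
      have := mul_pos hlam hz0
      rw [← hY1, ← hYr] at hE0
      linarith


theorem stmt13 (a b c : ℕ) (hb : 1 ≤ b) :
    {lam : ℝ | isComplEig (adjMat (thetaAdj a b c)) lam} =
      {lam : ℝ | isComplEig (adjMat (inftyAdj (a + c + 2) (b + c + 2))) lam} := by
  ext lam
  simp only [Set.mem_setOf_eq]
  exact ⟨dir1 a b c hb lam, dir2 a b c hb lam⟩
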